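/- arXiv:2312.12585 — 2 statements merged into one kernel-verified Lean document; each statement's English description precedes it below -/
import Mathlib

section
/- On clean states the transferred policy coincides with the original optimal policy: for every s ∈ (F_S '' S) ∩ S, π̃(s) = π*(s). -/
open scoped Classical

/-- The state poisoning map: add the trigger `δ` on targeted states, identity elsewhere. -/
noncomputable def poisonState {G : Type*} [AddGroup G] (Sdag : Set G) (δ : G) (s : G) : G :=
  if s ∈ Sdag then s + δ else s

/-- The inverse state map: identity on clean states, subtract the trigger `δ` elsewhere. -/
noncomputable def unpoisonState {G : Type*} [AddGroup G] (S : Set G) (δ : G) (s : G) : G :=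
  if s ∈ S then s else s - δ

/-- The action swap map: on targeted states it transposes the target action `a†` with the
designated optimal action `a*(s)`; elsewhere it is the identity. -/
noncomputable def swapAction {G A : Type*} (Sdag : Set G) (adag : A) (astar : G → A)
    (s : G) (a : A) : A :=
  if s ∈ Sdag then
    (if a = adag then astar s else if a = astar s then adag else a)
  else a

/-- The transferred policy `π̃ s = { F_A (F_S⁻ s) a : a ∈ π* (F_S⁻ s) }`. -/
noncomputable def transferredPolicy {G A : Type*} [AddGroup G] (S Sdag : Set G) (δ : G)
    (adag : A) (astar : G → A) (piStar : G → Set A) (s : G) : Set A :=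
  swapAction Sdag adag astar (unpoisonState S δ s) '' piStar (unpoisonState S δ s)

theorem poisonState_notMem_of_mem {G : Type*} [AddGroup G] {S Sdag : Set G} {δ : G}
    (htrig : ∀ s ∈ Sdag, s + δ ∉ S) {t : G} (ht : poisonState Sdag δ t ∈ S) :
    poisonState Sdag δ t ∉ Sdag := by
  by_cases htd : t ∈ Sdag
  · rw [poisonState, if_pos htd] at ht
    exact absurd ht (htrig t htd)
  · rwa [poisonState, if_neg htd]

theorem unpoisonState_of_mem {G : Type*} [AddGroup G] {S : Set G} (δ : G) {s : G} (hs : s ∈ S) :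
    unpoisonState S δ s = s :=
  if_pos hs

theorem swapAction_of_notMem {G A : Type*} {Sdag : Set G} (adag : A) (astar : G → A) {s : G}
    (hs : s ∉ Sdag) : swapAction Sdag adag astar s = id :=
  funext fun _ => if_neg hs

theorem transferredPolicy_of_mem_of_notMem {G A : Type*} [AddGroup G] {S Sdag : Set G} (δ : G)
    (adag : A) (astar : G → A) (piStar : G → Set A) {s : G} (hsS : s ∈ S) (hs : s ∉ Sdag) :
    transferredPolicy S Sdag δ adag astar piStar s = piStar s := by
  rw [transferredPolicy, unpoisonState_of_mem δ hsS, swapAction_of_notMem adag astar hs,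
    Set.image_id]

theorem transferredPolicy_eq_on_clean_general {G A : Type*} [AddGroup G] (S Sdag : Set G) (δ : G)
    (adag : A) (astar : G → A) (piStar : G → Set A)
    (htrig : ∀ s ∈ Sdag, s + δ ∉ S) :
    ∀ s ∈ (poisonState Sdag δ '' S) ∩ S,
      transferredPolicy S Sdag δ adag astar piStar s = piStar s := by
  rintro _ ⟨⟨t, -, rfl⟩, hsS⟩
  exact transferredPolicy_of_mem_of_notMem δ adag astar piStar hsS
    (poisonState_notMem_of_mem htrig hsS)

/-- On clean states the transferred policy coincides with the original optimal policy. -/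
theorem transferredPolicy_eq_on_clean {G A : Type*} [AddGroup G] (S Sdag : Set G) (δ : G)
    (adag : A) (astar : G → A) (piStar : G → Set A)
    (hsub : Sdag ⊆ S) (htrig : ∀ s ∈ Sdag, s + δ ∉ S) :
    ∀ s ∈ (poisonState Sdag δ '' S) ∩ S,
      transferredPolicy S Sdag δ adag astar piStar s = piStar s :=
  transferredPolicy_eq_on_clean_general S Sdag δ adag astar piStar htrig
end

section
/- Without the uniqueness assumption on optimal actions, the following weaker feasibility guarantee holds: if a*(s) ∈ π*(s) for every targeted state s ∈ S†, then the target action is contained in the transferred policy on every poisoned targeted state, i.e. a† ∈ π̃(s) for every s ∈ (F_S '' S) \ S. -/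
open scoped Classical

section Poisoning

variable {G A : Type*}

theorem swapAction_self_of_mem {Sdag : Set G} {s : G} (adag : A) (astar : G → A)
    (hs : s ∈ Sdag) : swapAction Sdag adag astar s (astar s) = adag := by
  by_cases h : astar s = adag <;> simp [swapAction, hs, h]

variable [AddGroup G]

theorem poisonState_of_mem {Sdag : Set G} {s : G} (δ : G) (hs : s ∈ Sdag) :
    poisonState Sdag δ s = s + δ :=
  if_pos hs

theorem poisonState_of_notMem {Sdag : Set G} {s : G} (δ : G) (hs : s ∉ Sdag) :
    poisonState Sdag δ s = s :=
  if_neg hs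

theorem unpoisonState_add_of_notMem {S : Set G} {s δ : G} (hs : s + δ ∉ S) :
    unpoisonState S δ (s + δ) = s := by
  simp [unpoisonState, hs]

theorem target_mem_transferredPolicy_add {S Sdag : Set G} {s δ : G} {adag : A}
    {astar : G → A} {piStar : G → Set A} (hs : s ∈ Sdag) (htrig : s + δ ∉ S)
    (hopt : astar s ∈ piStar s) :
    adag ∈ transferredPolicy S Sdag δ adag astar piStar (s + δ) := by
  rw [transferredPolicy, unpoisonState_add_of_notMem htrig]
  exact ⟨astar s, hopt, swapAction_self_of_mem adag astar hs⟩

end Poisoning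

theorem target_mem_transferredPolicy_general {G A : Type*} [AddGroup G] (S Sdag : Set G) (δ : G)
    (adag : A) (astar : G → A) (piStar : G → Set A)
    (htrig : ∀ s ∈ Sdag, s + δ ∉ S)
    (hopt : ∀ s ∈ Sdag, astar s ∈ piStar s) :
    ∀ s ∈ (poisonState Sdag δ '' S) \ S,
      adag ∈ transferredPolicy S Sdag δ adag astar piStar s := by
  rintro _ ⟨⟨t, htS, rfl⟩, hpoisoned⟩
  by_cases ht : t ∈ Sdag
  · rw [poisonState_of_mem δ ht]
    exact target_mem_transferredPolicy_add ht (htrig t ht) (hopt t ht)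
  · rw [poisonState_of_notMem δ ht] at hpoisoned
    exact absurd htS hpoisoned

/-- Weaker feasibility guarantee: if `a*(s) ∈ π*(s)` for every targeted state, then the
target action is contained in the transferred policy on every poisoned targeted state. -/
theorem target_mem_transferredPolicy {G A : Type*} [AddGroup G] (S Sdag : Set G) (δ : G)
    (adag : A) (astar : G → A) (piStar : G → Set A)
    (hsub : Sdag ⊆ S) (htrig : ∀ s ∈ Sdag, s + δ ∉ S)
    (hopt : ∀ s ∈ Sdag, astar s ∈ piStar s) :
    ∀ s ∈ (poisonState Sdag δ '' S) \ S,
      adag ∈ transferredPolicy S Sdag δ adag astar piStar s :=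
  target_mem_transferredPolicy_general S Sdag δ adag astar piStar htrig hopt
end
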